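/- arXiv:1205.4600 — 8 statements merged into one kernel-verified Lean document; each statement's English description precedes it below -/
import Mathlib

section
/- Let φ be a nondegenerate quadratic form on ℚ³ that is irreducible as a polynomial over ℝ, has a nontrivial zero in ℚ³, and vanishes at two distinct points of ℙ²(ℝ). Then there exist μ ∈ ℚ* and T ∈ GL₃(ℚ) such that μ·(φ∘T)(x₀,x₁,x₂) = x₀x₂ − x₁². -/
open MvPolynomial Finsupp

section Helpers
variable {K : Type*} [CommRing K]


private lemma finsupp_eq_iff (d m : Fin 3 →₀ ℕ) : d = m ↔ d 0 = m 0 ∧ d 1 = m 1 ∧ d 2 = m 2 := by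
  constructor
  · rintro rfl; exact ⟨rfl, rfl, rfl⟩
  · rintro ⟨h0, h1, h2⟩; ext i; fin_cases i <;> assumption

private lemma deg3 (d : Fin 3 →₀ ℕ) : d.degree = d 0 + d 1 + d 2 := by
  rw [Finsupp.degree_apply, Finset.sum_subset (Finset.subset_univ d.support)]
  · rw [Fin.sum_univ_three]
  · intro i _ hi; exact Finsupp.notMem_support_iff.mp hi

private lemma key_mono (i j : Fin 3) (a : K) :
    C a * X i * X j = monomial (single i 1 + single j 1) a := by
  have hX : ∀ k : Fin 3, (X k : MvPolynomial (Fin 3) K) = monomial (single k 1) 1 := fun _ => rfl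
  rw [C_apply, hX, hX, monomial_mul, monomial_mul, zero_add, mul_one, mul_one]

lemma hom2_poly (φ : MvPolynomial (Fin 3) K) (h : φ.IsHomogeneous 2) :
    φ = C (coeff (single 0 1 + single 0 1) φ) * X 0 * X 0
      + C (coeff (single 1 1 + single 1 1) φ) * X 1 * X 1
      + C (coeff (single 2 1 + single 2 1) φ) * X 2 * X 2
      + C (coeff (single 0 1 + single 1 1) φ) * X 0 * X 1
      + C (coeff (single 0 1 + single 2 1) φ) * X 0 * X 2
      + C (coeff (single 1 1 + single 2 1) φ) * X 1 * X 2 := by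
  ext m
  rw [key_mono, key_mono, key_mono, key_mono, key_mono, key_mono]
  simp only [coeff_add, coeff_monomial]
  by_cases hm : m 0 + m 1 + m 2 = 2
  · have hc : (m 0 = 2 ∧ m 1 = 0 ∧ m 2 = 0) ∨ (m 0 = 0 ∧ m 1 = 2 ∧ m 2 = 0) ∨
        (m 0 = 0 ∧ m 1 = 0 ∧ m 2 = 2) ∨ (m 0 = 1 ∧ m 1 = 1 ∧ m 2 = 0) ∨
        (m 0 = 1 ∧ m 1 = 0 ∧ m 2 = 1) ∨ (m 0 = 0 ∧ m 1 = 1 ∧ m 2 = 1) := by omega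
    rcases hc with ⟨h0,h1,h2⟩|⟨h0,h1,h2⟩|⟨h0,h1,h2⟩|⟨h0,h1,h2⟩|⟨h0,h1,h2⟩|⟨h0,h1,h2⟩
    · have e : (single (0:Fin 3) 1 + single 0 1 : Fin 3 →₀ ℕ) = m := by
        ext k; fin_cases k <;> simp [Finsupp.single_apply, h0, h1, h2]
      rw [← e]; simp [finsupp_eq_iff, Finsupp.single_apply]
    · have e : (single (1:Fin 3) 1 + single 1 1 : Fin 3 →₀ ℕ) = m := by
        ext k; fin_cases k <;> simp [Finsupp.single_apply, h0, h1, h2]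
      rw [← e]; simp [finsupp_eq_iff, Finsupp.single_apply]
    · have e : (single (2:Fin 3) 1 + single 2 1 : Fin 3 →₀ ℕ) = m := by
        ext k; fin_cases k <;> simp [Finsupp.single_apply, h0, h1, h2]
      rw [← e]; simp [finsupp_eq_iff, Finsupp.single_apply]
    · have e : (single (0:Fin 3) 1 + single 1 1 : Fin 3 →₀ ℕ) = m := by
        ext k; fin_cases k <;> simp [Finsupp.single_apply, h0, h1, h2]
      rw [← e]; simp [finsupp_eq_iff, Finsupp.single_apply]
    · have e : (single (0:Fin 3) 1 + single 2 1 : Fin 3 →₀ ℕ) = m := by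
        ext k; fin_cases k <;> simp [Finsupp.single_apply, h0, h1, h2]
      rw [← e]; simp [finsupp_eq_iff, Finsupp.single_apply]
    · have e : (single (1:Fin 3) 1 + single 2 1 : Fin 3 →₀ ℕ) = m := by
        ext k; fin_cases k <;> simp [Finsupp.single_apply, h0, h1, h2]
      rw [← e]; simp [finsupp_eq_iff, Finsupp.single_apply]
  · rw [h.coeff_eq_zero (by rw [deg3]; omega)]
    have hne : ∀ i j : Fin 3, ¬(single i 1 + single j 1 = m) := by
      intro i j he
      rw [finsupp_eq_iff] at he
      fin_cases i <;> fin_cases j <;> simp [Finsupp.single_apply] at he <;> omega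
    simp [hne]

end Helpers

section Field
variable {K : Type*} [Field K] [CharZero K]

noncomputable def co (φ : MvPolynomial (Fin 3) K) (i j : Fin 3) : K :=
  coeff (single i 1 + single j 1) φ

lemma eval_quad (φ : MvPolynomial (Fin 3) K) (h : φ.IsHomogeneous 2) (x : Fin 3 → K) :
    eval x φ = co φ 0 0 * x 0 ^ 2 + co φ 1 1 * x 1 ^ 2 + co φ 2 2 * x 2 ^ 2
      + co φ 0 1 * (x 0 * x 1) + co φ 0 2 * (x 0 * x 2) + co φ 1 2 * (x 1 * x 2) := by
  conv_lhs => rw [hom2_poly φ h]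
  simp only [map_add, map_mul, eval_C, eval_X, co]
  ring

noncomputable def polarB (φ : MvPolynomial (Fin 3) K) (x y : Fin 3 → K) : K :=
  co φ 0 0 * (x 0 * y 0) + co φ 1 1 * (x 1 * y 1) + co φ 2 2 * (x 2 * y 2)
  + co φ 0 1 * (x 0 * y 1 + x 1 * y 0) / 2 + co φ 0 2 * (x 0 * y 2 + x 2 * y 0) / 2
  + co φ 1 2 * (x 1 * y 2 + x 2 * y 1) / 2

lemma eval_comb (φ : MvPolynomial (Fin 3) K) (h : φ.IsHomogeneous 2)
    (α β γ : K) (a b c : Fin 3 → K) :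
    eval (fun i => α * a i + β * b i + γ * c i) φ
      = α^2 * eval a φ + β^2 * eval b φ + γ^2 * eval c φ
        + 2*α*β * polarB φ a b + 2*α*γ * polarB φ a c + 2*β*γ * polarB φ b c := by
  rw [eval_quad φ h, eval_quad φ h, eval_quad φ h, eval_quad φ h]
  unfold polarB
  field_simp
  ring

noncomputable def linP (N : Matrix (Fin 3) (Fin 3) K) : Fin 3 → MvPolynomial (Fin 3) K :=
  fun i => ∑ j, C (N i j) * X j

lemma eval_bind_lin (N : Matrix (Fin 3) (Fin 3) K) (p : MvPolynomial (Fin 3) K) (x : Fin 3 → K) :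
    eval x (bind₁ (linP N) p) = eval (N.mulVec x) p := by
  have h1 : eval x (bind₁ (linP N) p)
      = eval₂Hom (RingHom.id K) (fun i => eval₂Hom (RingHom.id K) x (linP N i)) p :=
    eval₂Hom_bind₁ _ _ _ _
  rw [h1]
  have h2 : (fun i => eval₂Hom (RingHom.id K) x (linP N i)) = N.mulVec x := by
    funext i
    simp [linP, Matrix.mulVec, dotProduct]
  rw [h2]
  rfl

end Field

lemma reducible_contra (ψ : MvPolynomial (Fin 3) ℝ) (hirr : Irreducible ψ)
    (NR : Matrix (Fin 3) (Fin 3) ℝ) (hdet : NR.det ≠ 0)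
    (L1 L2 : MvPolynomial (Fin 3) ℝ) (h01 : eval 0 L1 = 0) (h02 : eval 0 L2 = 0)
    (heq : ∀ x : Fin 3 → ℝ, eval (NR.mulVec x) ψ = eval x L1 * eval x L2) : False := by
  have hbind : bind₁ (linP NR) ψ = L1 * L2 := by
    apply MvPolynomial.funext
    intro x
    rw [eval_bind_lin, map_mul]
    exact heq x
  have hunit : IsUnit NR.det := isUnit_iff_ne_zero.2 hdet
  have hψ : ψ = bind₁ (linP NR⁻¹) L1 * bind₁ (linP NR⁻¹) L2 := by
    rw [← map_mul, ← hbind]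
    apply MvPolynomial.funext
    intro x
    rw [eval_bind_lin, eval_bind_lin, Matrix.mulVec_mulVec, Matrix.mul_nonsing_inv _ hunit,
      Matrix.one_mulVec]
  rcases hirr.isUnit_or_isUnit hψ with h | h
  · have := h.map (eval (0 : Fin 3 → ℝ))
    rw [eval_bind_lin, Matrix.mulVec_zero, h01] at this
    exact this.ne_zero rfl
  · have := h.map (eval (0 : Fin 3 → ℝ))
    rw [eval_bind_lin, Matrix.mulVec_zero, h02] at this
    exact this.ne_zero rfl

lemma cast_co (φ : MvPolynomial (Fin 3) ℚ) (i j : Fin 3) :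
    co (MvPolynomial.map (algebraMap ℚ ℝ) φ) i j = ((co φ i j : ℚ) : ℝ) := by
  simp [co, coeff_map, eq_ratCast]

lemma cast_eval (φ : MvPolynomial (Fin 3) ℚ) (hhom : φ.IsHomogeneous 2) (v : Fin 3 → ℚ) :
    eval (fun i => (v i : ℝ)) (MvPolynomial.map (algebraMap ℚ ℝ) φ) = ((eval v φ : ℚ) : ℝ) := by
  rw [eval_quad _ (hhom.map _), eval_quad _ hhom]
  simp only [cast_co]
  push_cast
  ring

lemma cast_polarB (φ : MvPolynomial (Fin 3) ℚ) (v y : Fin 3 → ℚ) :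
    polarB (MvPolynomial.map (algebraMap ℚ ℝ) φ) (fun i => (v i : ℝ)) (fun i => (y i : ℝ))
      = ((polarB φ v y : ℚ) : ℝ) := by
  unfold polarB
  simp only [cast_co]
  push_cast
  ring

lemma rad_core (φ : MvPolynomial (Fin 3) ℚ) (hhom : φ.IsHomogeneous 2)
    (hirrR : Irreducible (MvPolynomial.map (algebraMap ℚ ℝ) φ))
    (hR2 : ∃ u v : Fin 3 → ℝ, u ≠ 0 ∧ v ≠ 0 ∧
      MvPolynomial.eval u (MvPolynomial.map (algebraMap ℚ ℝ) φ) = 0 ∧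
      MvPolynomial.eval v (MvPolynomial.map (algebraMap ℚ ℝ) φ) = 0 ∧
      ∀ c : ℝ, v ≠ c • u)
    (z b1 b2 : Fin 3 → ℚ)
    (hdet : (Matrix.of fun r c => ![z, b1, b2] c r).det ≠ 0)
    (hrad : ∀ y : Fin 3 → ℚ, polarB φ z y = 0) : False := by
  set φR := MvPolynomial.map (algebraMap ℚ ℝ) φ with hφR
  have hhomR : φR.IsHomogeneous 2 := hhom.map _
  set N : Matrix (Fin 3) (Fin 3) ℚ := Matrix.of fun r c => ![z, b1, b2] c r with hN
  set NR : Matrix (Fin 3) (Fin 3) ℝ := N.map (algebraMap ℚ ℝ) with hNR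
  have hdetR : NR.det ≠ 0 := by
    rw [hNR, show N.map ⇑(algebraMap ℚ ℝ) = (algebraMap ℚ ℝ).mapMatrix N from rfl,
      ← RingHom.map_det]
    simpa [eq_ratCast] using hdet
  -- mulVec formula
  have hmv : ∀ x : Fin 3 → ℝ, NR.mulVec x
      = fun i => x 0 * (z i : ℝ) + x 1 * (b1 i : ℝ) + x 2 * (b2 i : ℝ) := by
    intro x
    funext i
    simp [hNR, hN, Matrix.mulVec, dotProduct, Fin.sum_univ_three, eq_ratCast]
    ring
  set p := eval b1 φ with hp'
  set r := eval b2 φ with hr'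
  set s := 2 * polarB φ b1 b2 with hs'
  have hQz : eval z φ = 0 := by
    have : eval z φ = polarB φ z z := by
      rw [eval_quad _ hhom]; unfold polarB; ring
    rw [this, hrad]
  have hkey : ∀ x : Fin 3 → ℝ, eval (NR.mulVec x) φR
      = (p : ℝ) * x 1 ^ 2 + (s : ℝ) * (x 1 * x 2) + (r : ℝ) * x 2 ^ 2 := by
    intro x
    rw [hmv x, eval_comb φR hhomR (x 0) (x 1) (x 2) (fun i => (z i : ℝ))
      (fun i => (b1 i : ℝ)) (fun i => (b2 i : ℝ))]
    rw [cast_eval φ hhom, cast_eval φ hhom, cast_eval φ hhom,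
      cast_polarB, cast_polarB, cast_polarB, hQz, hrad, hrad]
    push_cast [hs']
    ring
  obtain ⟨u, v, hu0, hv0, hQu, hQv, hlast⟩ := hR2
  by_cases hps : p = 0
  · exact reducible_contra φR hirrR NR hdetR (X 2) (C (s : ℝ) * X 1 + C (r : ℝ) * X 2)
      (by simp) (by simp)
      (fun x => by
        rw [hkey x]
        simp only [map_add, map_mul, eval_C, eval_X, hps]
        push_cast
        ring)
  · have hpR : (p : ℝ) ≠ 0 := by exact_mod_cast hps
    by_cases hdisc : (0:ℚ) ≤ s ^ 2 - 4 * p * r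
    · set D : ℝ := (s : ℝ) ^ 2 - 4 * (p : ℝ) * (r : ℝ) with hD
      have hD0 : 0 ≤ D := by rw [hD]; exact_mod_cast hdisc
      set t : ℝ := (-(s : ℝ) + Real.sqrt D) / (2 * (p : ℝ)) with ht'
      have h2 : 2 * (p : ℝ) * t = -(s : ℝ) + Real.sqrt D := by
        rw [ht']; field_simp
      have h3 : (2 * (p : ℝ) * t + (s : ℝ)) ^ 2 = D := by
        rw [h2]
        have he : -(s : ℝ) + Real.sqrt D + s = Real.sqrt D := by ring
        rw [he]
        exact Real.sq_sqrt hD0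
      have ht : (p : ℝ) * t ^ 2 + (s : ℝ) * t + (r : ℝ) = 0 := by
        have h4 : 4 * (p : ℝ) * ((p : ℝ) * t ^ 2 + (s : ℝ) * t + (r : ℝ)) = 0 := by
          rw [hD] at h3; linear_combination h3
        rcases mul_eq_zero.mp h4 with h | h
        · exact absurd h (by simpa using hpR)
        · exact h
      exact reducible_contra φR hirrR NR hdetR
        (C (p : ℝ) * X 1 + C ((s : ℝ) + (p : ℝ) * t) * X 2) (X 1 - C t * X 2)
        (by simp) (by simp)
        (fun x => by
          rw [hkey x]
          simp only [map_add, map_sub, map_mul, eval_C, eval_X]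
          linear_combination (x 2 ^ 2) * ht)
    · push_neg at hdisc
      have hdR : (s : ℝ) ^ 2 - 4 * (p : ℝ) * (r : ℝ) < 0 := by exact_mod_cast hdisc
      have hniso : ∀ y1 y2 : ℝ, (p : ℝ) * y1 ^ 2 + (s : ℝ) * (y1 * y2) + (r : ℝ) * y2 ^ 2 = 0 →
          y1 = 0 ∧ y2 = 0 := by
        intro y1 y2 h
        have key : (2 * (p : ℝ) * y1 + (s : ℝ) * y2) ^ 2
            + (4 * (p : ℝ) * (r : ℝ) - (s : ℝ) ^ 2) * y2 ^ 2 = 0 := by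
          linear_combination (4 * (p : ℝ)) * h
        have hy2 : y2 = 0 := by
          by_contra hy2
          have hsq : 0 < y2 ^ 2 := lt_of_le_of_ne (sq_nonneg y2) (Ne.symm (pow_ne_zero 2 hy2))
          nlinarith [sq_nonneg (2 * (p : ℝ) * y1 + (s : ℝ) * y2),
            mul_pos (show (0:ℝ) < 4 * (p : ℝ) * (r : ℝ) - (s : ℝ) ^ 2 by linarith) hsq]
        have hy1 : y1 = 0 := by
          rw [hy2] at h
          have : (p : ℝ) * y1 ^ 2 = 0 := by linarith [h]
          rcases mul_eq_zero.mp this with h' | h'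
          · exact absurd h' hpR
          · exact pow_eq_zero_iff (n := 2) (by norm_num) |>.mp h'
        exact ⟨hy1, hy2⟩
      have hmul : ∀ uu : Fin 3 → ℝ, uu ≠ 0 → eval uu φR = 0 →
          ∃ k : ℝ, k ≠ 0 ∧ uu = fun i => k * (z i : ℝ) := by
        intro uu huu0 hQuu
        set y : Fin 3 → ℝ := NR⁻¹.mulVec uu with hy
        have huu : NR.mulVec y = uu := by
          rw [hy, Matrix.mulVec_mulVec, Matrix.mul_nonsing_inv _ (isUnit_iff_ne_zero.2 hdetR),
            Matrix.one_mulVec]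
        have h0 : (p : ℝ) * y 1 ^ 2 + (s : ℝ) * (y 1 * y 2) + (r : ℝ) * y 2 ^ 2 = 0 := by
          have hk := hkey y
          rw [huu, hQuu] at hk
          linarith [hk]
        obtain ⟨h1, h2⟩ := hniso _ _ h0
        refine ⟨y 0, ?_, ?_⟩
        · intro hk0
          apply huu0
          rw [← huu, hmv y]
          funext i
          simp [hk0, h1, h2]
        · rw [← huu, hmv y]
          funext i
          simp [h1, h2]
      obtain ⟨k, hk, hu⟩ := hmul u hu0 hQu
      obtain ⟨k', hk', hv⟩ := hmul v hv0 hQv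
      apply hlast (k' / k)
      rw [hv, hu]
      funext i
      simp only [Pi.smul_apply, smul_eq_mul]
      field_simp

noncomputable def rowB (φ : MvPolynomial (Fin 3) ℚ) (x : Fin 3 → ℚ) : Fin 3 → ℚ :=
  fun j => polarB φ x (fun i => if i = j then 1 else 0)

lemma polarB_eq_row (φ : MvPolynomial (Fin 3) ℚ) (x y : Fin 3 → ℚ) :
    polarB φ x y = rowB φ x 0 * y 0 + rowB φ x 1 * y 1 + rowB φ x 2 * y 2 := by
  unfold rowB polarB
  norm_num [Fin.ext_iff]
  ring

lemma rad (φ : MvPolynomial (Fin 3) ℚ) (hhom : φ.IsHomogeneous 2)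
    (hirrR : Irreducible (MvPolynomial.map (algebraMap ℚ ℝ) φ))
    (hR2 : ∃ u v : Fin 3 → ℝ, u ≠ 0 ∧ v ≠ 0 ∧
      MvPolynomial.eval u (MvPolynomial.map (algebraMap ℚ ℝ) φ) = 0 ∧
      MvPolynomial.eval v (MvPolynomial.map (algebraMap ℚ ℝ) φ) = 0 ∧
      ∀ c : ℝ, v ≠ c • u)
    (z : Fin 3 → ℚ) (hz : z ≠ 0)
    (hrad : ∀ y : Fin 3 → ℚ, polarB φ z y = 0) : False := by
  have hex : ∃ i, z i ≠ 0 := by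
    by_contra h
    push_neg at h
    exact hz (funext fun i => h i)
  obtain ⟨i, hzi⟩ := hex
  fin_cases i
  · refine rad_core φ hhom hirrR hR2 z ![0,1,0] ![0,0,1] ?_ hrad
    have : (Matrix.of fun r c => ![z, ![0,1,0], ![0,0,1]] c r).det = z 0 := by
      simp [Matrix.det_fin_three, Matrix.vecHead, Matrix.vecTail]
    rw [this]
    exact hzi
  · refine rad_core φ hhom hirrR hR2 z ![1,0,0] ![0,0,1] ?_ hrad
    have : (Matrix.of fun r c => ![z, ![1,0,0], ![0,0,1]] c r).det = -z 1 := by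
      simp [Matrix.det_fin_three, Matrix.vecHead, Matrix.vecTail]
    rw [this]
    simpa using hzi
  · refine rad_core φ hhom hirrR hR2 z ![1,0,0] ![0,1,0] ?_ hrad
    have : (Matrix.of fun r c => ![z, ![1,0,0], ![0,1,0]] c r).det = z 2 := by
      simp [Matrix.det_fin_three, Matrix.vecHead, Matrix.vecTail]
    rw [this]
    exact hzi

theorem reduction_to_parabola
    (φ : MvPolynomial (Fin 3) ℚ)
    (hhom : φ.IsHomogeneous 2)
    (hirrQ : Irreducible φ)
    (hirrR : Irreducible (MvPolynomial.map (algebraMap ℚ ℝ) φ))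
    (hQzero : ∃ a : Fin 3 → ℚ, a ≠ 0 ∧ MvPolynomial.eval a φ = 0)
    (hR2 : ∃ u v : Fin 3 → ℝ, u ≠ 0 ∧ v ≠ 0 ∧
      MvPolynomial.eval u (MvPolynomial.map (algebraMap ℚ ℝ) φ) = 0 ∧
      MvPolynomial.eval v (MvPolynomial.map (algebraMap ℚ ℝ) φ) = 0 ∧
      ∀ c : ℝ, v ≠ c • u) :
    ∃ (μ : ℚ) (T : (Fin 3 → ℚ) ≃ₗ[ℚ] (Fin 3 → ℚ)), μ ≠ 0 ∧
      ∀ x : Fin 3 → ℚ,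
        μ * MvPolynomial.eval (T x) φ = x 0 * x 2 - (x 1) ^ 2 := by
  classical
  obtain ⟨a, ha0, haQ⟩ := hQzero
  -- bilinearity toolkit
  have hQB : ∀ x, eval x φ = polarB φ x x := fun x => by
    rw [eval_quad φ hhom]; unfold polarB; ring
  have hBsymm : ∀ x y, polarB φ x y = polarB φ y x := fun x y => by
    unfold polarB; ring
  have hcomb : ∀ (c1 c2 c3 : ℚ) (x y z : Fin 3 → ℚ),
      eval (fun i => c1 * x i + c2 * y i + c3 * z i) φ
        = c1^2 * eval x φ + c2^2 * eval y φ + c3^2 * eval z φ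
          + 2*c1*c2 * polarB φ x y + 2*c1*c3 * polarB φ x z + 2*c2*c3 * polarB φ y z := by
    intro c1 c2 c3 x y z
    rw [eval_quad φ hhom, eval_quad φ hhom, eval_quad φ hhom, eval_quad φ hhom]
    unfold polarB
    ring
  have hBcombr : ∀ (c1 c2 c3 : ℚ) (w x y z : Fin 3 → ℚ),
      polarB φ w (fun i => c1 * x i + c2 * y i + c3 * z i)
        = c1 * polarB φ w x + c2 * polarB φ w y + c3 * polarB φ w z := by
    intro c1 c2 c3 w x y z
    unfold polarB
    ring
  -- Step 1: find b with polarB a b ≠ 0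
  have hb : ∃ b, polarB φ a b ≠ 0 := by
    by_contra h
    push_neg at h
    exact rad φ hhom hirrR hR2 a ha0 h
  obtain ⟨b, hab⟩ := hb
  set β : ℚ := polarB φ a b with hβdef
  -- Step 2: b' isotropic with B a b' = β
  set b' : Fin 3 → ℚ := fun i => b i - (eval b φ / (2*β)) * a i with hb'def
  have hb'comb : b' = fun i => 1 * b i + (-(eval b φ / (2*β))) * a i + 0 * a i := by
    funext i; rw [hb'def]; ring
  have hQb' : eval b' φ = 0 := by
    rw [hb'comb, hcomb, haQ, hBsymm b a, ← hβdef]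
    field_simp
    ring
  have hBab' : polarB φ a b' = β := by
    rw [hb'comb, hBcombr, ← hβdef, ← hQB a, haQ]
    ring
  have hBcombl : ∀ (c1 c2 c3 : ℚ) (x y z w : Fin 3 → ℚ),
      polarB φ (fun i => c1 * x i + c2 * y i + c3 * z i) w
        = c1 * polarB φ x w + c2 * polarB φ y w + c3 * polarB φ z w := by
    intro c1 c2 c3 x y z w
    unfold polarB
    ring
  -- Step 3: the vector c orthogonal to a and b'
  set α : Fin 3 → ℚ := rowB φ a with hαdef
  set δ : Fin 3 → ℚ := rowB φ b' with hδdef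
  set c : Fin 3 → ℚ :=
    ![α 1 * δ 2 - α 2 * δ 1, α 2 * δ 0 - α 0 * δ 2, α 0 * δ 1 - α 1 * δ 0] with hcdef
  have hc0 : c 0 = α 1 * δ 2 - α 2 * δ 1 := by rw [hcdef]; rfl
  have hc1 : c 1 = α 2 * δ 0 - α 0 * δ 2 := by rw [hcdef]; rfl
  have hc2 : c 2 = α 0 * δ 1 - α 1 * δ 0 := by rw [hcdef]; rfl
  have hrowa : ∀ y, polarB φ a y = α 0 * y 0 + α 1 * y 1 + α 2 * y 2 := fun y => by
    rw [polarB_eq_row, hαdef]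
  have hrowb' : ∀ y, polarB φ b' y = δ 0 * y 0 + δ 1 * y 1 + δ 2 * y 2 := fun y => by
    rw [polarB_eq_row, hδdef]
  have hBac : polarB φ a c = 0 := by rw [hrowa, hc0, hc1, hc2]; ring
  have hBb'c : polarB φ b' c = 0 := by rw [hrowb', hc0, hc1, hc2]; ring
  -- c is nonzero
  have hcne : c ≠ 0 := by
    intro hc
    have e0 : α 1 * δ 2 - α 2 * δ 1 = 0 := by rw [← hc0, hc]; rfl
    have e1 : α 2 * δ 0 - α 0 * δ 2 = 0 := by rw [← hc1, hc]; rfl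
    have e2 : α 0 * δ 1 - α 1 * δ 0 = 0 := by rw [← hc2, hc]; rfl
    have hαne : α 0 ≠ 0 ∨ α 1 ≠ 0 ∨ α 2 ≠ 0 := by
      by_contra h
      push_neg at h
      obtain ⟨h0, h1, h2⟩ := h
      apply hab
      rw [hβdef, hrowa b, h0, h1, h2]
      ring
    have hδeq : ∃ lam : ℚ, δ 0 = lam * α 0 ∧ δ 1 = lam * α 1 ∧ δ 2 = lam * α 2 := by
      rcases hαne with h | h | h
      · refine ⟨δ 0 / α 0, by field_simp, ?_, ?_⟩
        · rw [div_mul_eq_mul_div, eq_div_iff h]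
          linear_combination e2
        · rw [div_mul_eq_mul_div, eq_div_iff h]
          linear_combination -e1
      · refine ⟨δ 1 / α 1, ?_, by field_simp, ?_⟩
        · rw [div_mul_eq_mul_div, eq_div_iff h]
          linear_combination -e2
        · rw [div_mul_eq_mul_div, eq_div_iff h]
          linear_combination e0
      · refine ⟨δ 2 / α 2, ?_, ?_, by field_simp⟩
        · rw [div_mul_eq_mul_div, eq_div_iff h]
          linear_combination e1
        · rw [div_mul_eq_mul_div, eq_div_iff h]
          linear_combination -e0
    obtain ⟨lam, hl0, hl1, hl2⟩ := hδeq
    set w : Fin 3 → ℚ := fun i => b' i - lam * a i with hwdef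
    have hwcomb : w = fun i => 1 * b' i + (-lam) * a i + 0 * a i := by
      funext i; rw [hwdef]; ring
    have hwne : w ≠ 0 := by
      intro hw
      apply hab
      have hback : ∀ i, b' i = lam * a i := by
        intro i
        have := congrFun hw i
        rw [hwdef] at this
        simp only [Pi.zero_apply] at this
        linarith
      have hb'lam : b' = fun i => lam * a i + 0 * a i + 0 * a i := by
        funext i; rw [hback i]; ring
      rw [← hBab', hb'lam, hBcombr, ← hQB a, haQ]
      ring
    apply rad φ hhom hirrR hR2 w hwne
    intro y
    rw [hwcomb, hBcombl, hrowa y, hrowb' y]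
    linear_combination y 0 * hl0 + y 1 * hl1 + y 2 * hl2
  have hBzero : ∀ x : Fin 3 → ℚ, polarB φ x 0 = 0 := by
    intro x
    unfold polarB
    simp
  -- Step 4: d := eval c φ is nonzero
  set d : ℚ := eval c φ with hddef
  -- determinant of (a, c, b') is nonzero
  set M : Matrix (Fin 3) (Fin 3) ℚ := Matrix.of fun r c' => ![a, c, b'] c' r with hMdef
  have hMmv : ∀ x : Fin 3 → ℚ, M.mulVec x = fun i => x 0 * a i + x 1 * c i + x 2 * b' i := by
    intro x
    funext i
    rw [hMdef]
    simp [Matrix.mulVec, dotProduct, Fin.sum_univ_three]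
    ring
  have hMdet : M.det ≠ 0 := by
    intro hdet
    obtain ⟨v, hv0, hv⟩ := Matrix.exists_mulVec_eq_zero_iff.mpr hdet
    have ha' : polarB φ a (M.mulVec v) = 0 := by rw [hv, hBzero]
    have hb'' : polarB φ b' (M.mulVec v) = 0 := by rw [hv, hBzero]
    rw [hMmv, hBcombr, ← hQB a, haQ, hBac, hBab'] at ha'
    rw [hMmv, hBcombr, hBsymm b' a, hBab', hBb'c] at hb''
    have hv2 : v 2 = 0 := by
      have h1 : v 2 * β = 0 := by linarith [ha']
      rcases mul_eq_zero.mp h1 with h | h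
      · exact h
      · exact absurd h hab
    have hv0' : v 0 = 0 := by
      have hq : polarB φ b' b' = 0 := by rw [← hQB b', hQb']
      rw [hq] at hb''
      have : v 0 * β = 0 := by linarith [hb'']
      rcases mul_eq_zero.mp this with h | h
      · exact h
      · exact absurd h hab
    have hcj : ∃ j, c j ≠ 0 := by
      by_contra h
      push_neg at h
      exact hcne (funext fun j => h j)
    obtain ⟨j, hcj⟩ := hcj
    have := congrFun hv j
    rw [hMmv] at this
    simp only [Pi.zero_apply, hv0', hv2] at this
    have hv1 : v 1 = 0 := by
      have h1 : v 1 * c j = 0 := by linarith [this]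
      rcases mul_eq_zero.mp h1 with h | h
      · exact h
      · exact absurd h hcj
    exact hv0 (funext fun j => by fin_cases j <;> simp [hv0', hv1, hv2])
  have hMu : IsUnit M.det := isUnit_iff_ne_zero.2 hMdet
  have hd0 : d ≠ 0 := by
    intro hd
    apply rad φ hhom hirrR hR2 c hcne
    intro y
    have hy : M.mulVec ((M⁻¹).mulVec y) = y := by
      rw [Matrix.mulVec_mulVec, Matrix.mul_nonsing_inv _ hMu, Matrix.one_mulVec]
    have : polarB φ c y = polarB φ c (M.mulVec ((M⁻¹).mulVec y)) := by rw [hy]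
    rw [this, hMmv, hBcombr, hBsymm c a, hBac, hBsymm c b', hBb'c, ← hQB c, ← hddef, hd]
    ring
  -- Step 5: final change of variables
  set lam : ℚ := -d / (2 * β) with hlamdef
  have hlamne : lam ≠ 0 := by
    rw [hlamdef]
    exact div_ne_zero (neg_ne_zero.2 hd0) (by simpa using hab)
  set M' : Matrix (Fin 3) (Fin 3) ℚ :=
    Matrix.of fun r c' => ![fun i => lam * a i, c, b'] c' r with hM'def
  have hM'mv : ∀ x : Fin 3 → ℚ,
      M'.mulVec x = fun i => (x 0 * lam) * a i + x 1 * c i + x 2 * b' i := by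
    intro x
    funext i
    rw [hM'def]
    simp [Matrix.mulVec, dotProduct, Fin.sum_univ_three]
    ring
  have hM'det : M'.det ≠ 0 := by
    intro hdet
    obtain ⟨v, hv0, hv⟩ := Matrix.exists_mulVec_eq_zero_iff.mpr hdet
    have ha' : polarB φ a (M'.mulVec v) = 0 := by rw [hv, hBzero]
    have hb'' : polarB φ b' (M'.mulVec v) = 0 := by rw [hv, hBzero]
    rw [hM'mv, hBcombr, ← hQB a, haQ, hBac, hBab'] at ha'
    rw [hM'mv, hBcombr, hBsymm b' a, hBab', hBb'c] at hb''
    have hv2 : v 2 = 0 := by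
      have h1 : v 2 * β = 0 := by linarith [ha']
      rcases mul_eq_zero.mp h1 with h | h
      · exact h
      · exact absurd h hab
    have hv0' : v 0 = 0 := by
      have hq : polarB φ b' b' = 0 := by rw [← hQB b', hQb']
      rw [hq] at hb''
      have h1 : v 0 * lam * β = 0 := by linarith [hb'']
      rcases mul_eq_zero.mp h1 with h | h
      · rcases mul_eq_zero.mp h with h' | h'
        · exact h'
        · exact absurd h' hlamne
      · exact absurd h hab
    have hcj : ∃ j, c j ≠ 0 := by
      by_contra h
      push_neg at h
      exact hcne (funext fun j => h j)
    obtain ⟨j, hcj⟩ := hcj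
    have := congrFun hv j
    rw [hM'mv] at this
    simp only [Pi.zero_apply, hv0', hv2] at this
    have hv1 : v 1 = 0 := by
      have h1 : v 1 * c j = 0 := by linarith [this]
      rcases mul_eq_zero.mp h1 with h | h
      · exact h
      · exact absurd h hcj
    exact hv0 (funext fun j => by fin_cases j <;> simp [hv0', hv1, hv2])
  have hM'unit : IsUnit M'.det := isUnit_iff_ne_zero.2 hM'det
  refine ⟨-1 / d, M'.toLinearEquiv' (M'.invertibleOfIsUnitDet hM'unit),
    div_ne_zero (by norm_num) hd0, ?_⟩
  intro x
  have hT : (M'.toLinearEquiv' (M'.invertibleOfIsUnitDet hM'unit)) x = M'.mulVec x := by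
    simp [Matrix.toLinearEquiv', Matrix.toLin'_apply]
  rw [hT, hM'mv, hcomb, haQ, hQb', ← hddef, hBac, hBab', hBsymm c b', hBb'c]
  rw [hlamdef]
  field_simp
  ring
end

section
/- Let b > 1 be a non-square positive integer and let (m,n) and (m',n') be solutions in positive integers of the Pell equation x² − b·y² = 1 with m' sufficiently large. Then m < m·m' − b·n·n' < m'. -/
/-!
With `X = m m' - b n n'` and `Y = m m' + b n n'`, the two Pell equations give
`X * Y = m² + m'² - 1`, while `0 < b n n' < m m'` bounds `Y` between `m m'` and `2 m m'`.
Hence `X` is roughly `(m² + m'²) / (m m')`, which exceeds `m` once `m' ≥ 2 m²`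
and stays below `m'` because `m ≥ 2`.
-/

section PellProduct

variable {b m n m' n' : ℤ}

theorem pell_product_mul_conj {R : Type*} [CommRing R] {b m n m' n' : R}
    (hPell : m ^ 2 - b * n ^ 2 = 1) (hPell' : m' ^ 2 - b * n' ^ 2 = 1) :
    (m * m' - b * n * n') * (m * m' + b * n * n') = m ^ 2 + m' ^ 2 - 1 := by
  linear_combination (b * n' ^ 2) * hPell + (m ^ 2 - 1) * hPell'

theorem pell_cross_term_lt (hm : 0 < m) (hm' : 0 < m')
    (hPell : m ^ 2 - b * n ^ 2 = 1) (hPell' : m' ^ 2 - b * n' ^ 2 = 1) :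
    b * n * n' < m * m' := by
  have hsq : (b * n * n') ^ 2 < (m * m') ^ 2 := by
    have : (b * n * n') ^ 2 = (m ^ 2 - 1) * (m' ^ 2 - 1) := by
      linear_combination (-(b * n' ^ 2)) * hPell - (m ^ 2 - 1) * hPell'
    nlinarith
  exact (le_abs_self _).trans_lt (abs_lt_of_sq_lt_sq hsq (by positivity))

theorem lt_pell_product (hm : 0 < m) (hcross : 0 < b * n * n') (hM : 2 * m ^ 2 ≤ m')
    (hPell : m ^ 2 - b * n ^ 2 = 1) (hPell' : m' ^ 2 - b * n' ^ 2 = 1) :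
    m < m * m' - b * n * n' := by
  have hY : 0 < m * m' + b * n * n' := by nlinarith
  have hle : b * n * n' ≤ m * m' - 1 :=
    Int.le_sub_one_of_lt (pell_cross_term_lt hm (by nlinarith) hPell hPell')
  refine lt_of_mul_lt_mul_right ?_ hY.le
  rw [pell_product_mul_conj hPell hPell']
  nlinarith [mul_nonneg (sub_nonneg.mpr hM) (by nlinarith : (0 : ℤ) ≤ m'),
    mul_le_mul_of_nonneg_left hle hm.le]

theorem pell_product_lt (hm : 2 ≤ m) (hcross : 0 < b * n * n') (hmm' : m ≤ m')
    (hPell : m ^ 2 - b * n ^ 2 = 1) (hPell' : m' ^ 2 - b * n' ^ 2 = 1) :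
    m * m' - b * n * n' < m' := by
  have hY : 0 < m * m' + b * n * n' := by nlinarith
  refine lt_of_mul_lt_mul_right ?_ hY.le
  rw [pell_product_mul_conj hPell hPell']
  nlinarith

end PellProduct

theorem pell_product_between_general
    (b m n : ℤ) (hb : 1 < b)
    (hm : 0 < m) (hn : 0 < n) (hPell : m ^ 2 - b * n ^ 2 = 1) :
    ∃ M : ℤ, ∀ m' n' : ℤ, 0 < m' → 0 < n' → m' ^ 2 - b * n' ^ 2 = 1 →
      M ≤ m' → m < m * m' - b * n * n' ∧ m * m' - b * n * n' < m' := by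
  refine ⟨2 * m ^ 2, fun m' n' _ hn' hPell' hM => ?_⟩
  have hm2 : 2 ≤ m := by nlinarith
  have hcross : 0 < b * n * n' := by positivity
  exact ⟨lt_pell_product hm hcross hM hPell hPell',
    pell_product_lt hm2 hcross (by nlinarith) hPell hPell'⟩

theorem pell_product_between
    (b m n : ℤ) (hb : 1 < b) (hbs : ¬ IsSquare b)
    (hm : 0 < m) (hn : 0 < n) (hPell : m ^ 2 - b * n ^ 2 = 1) :
    ∃ M : ℤ, ∀ m' n' : ℤ, 0 < m' → 0 < n' → m' ^ 2 - b * n' ^ 2 = 1 →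
      M ≤ m' → m < m * m' - b * n * n' ∧ m * m' - b * n * n' < m' :=
  pell_product_between_general b m n hb hm hn hPell
end

section
/- With the setup of the recursive sequence y_{i+1} = Φ(y_i,y_{i−2})·y_i − y_{i−2} (valid since φ(y_i)=1), the determinants alternate: det(y_i, y_{i−1}, y_{i−2}) = (−1)^{i−1}·det(y₁, y₀, y₋₁) for all i ≥ 1. -/
variable {R : Type*} [CommRing R]

-- Subtracting `c • a` leaves `![-b, a, d]`, a cyclic shift of `![a, d, -b]`.
theorem Matrix.det_of_smul_sub_vecCons (c : R) (a b d : Fin 3 → R) :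
    (Matrix.of ![c • a - b, a, d]).det = -(Matrix.of ![a, d, b]).det := by
  simp only [Matrix.det_fin_three, Matrix.of_apply, Matrix.cons_val, Pi.sub_apply,
    Pi.smul_apply, smul_eq_mul]
  ring

theorem Matrix.det_of_consecutive_eq_neg_one_pow_of_recurrence (y : ℕ → Fin 3 → R)
    (c : ℕ → R) (hrec : ∀ i, y (i + 3) = c i • y (i + 2) - y i) (i : ℕ) :
    (Matrix.of ![y (i + 2), y (i + 1), y i]).det
      = (-1) ^ i * (Matrix.of ![y 2, y 1, y 0]).det := by
  induction i with
  | zero => simp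
  | succ n ih =>
    rw [hrec n, Matrix.det_of_smul_sub_vecCons, ih, pow_succ]
    ring

theorem recursive_sequence_det_alternates_general
    (Φ : (Fin 3 → ℚ) →ₗ[ℚ] (Fin 3 → ℚ) →ₗ[ℚ] ℚ)
    (y : ℕ → Fin 3 → ℚ)
    (hrec : ∀ i, y (i + 3) = Φ (y (i + 2)) (y i) • y (i + 2) - y i) :
    ∀ i, Matrix.det (Matrix.of ![y (i + 2), y (i + 1), y i])
      = (-1 : ℚ) ^ i * Matrix.det (Matrix.of ![y 2, y 1, y 0]) :=
  Matrix.det_of_consecutive_eq_neg_one_pow_of_recurrence y _ hrec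

theorem recursive_sequence_det_alternates
    (Φ : (Fin 3 → ℚ) →ₗ[ℚ] (Fin 3 → ℚ) →ₗ[ℚ] ℚ)
    (hsymm : ∀ u v, Φ u v = Φ v u)
    (φ : (Fin 3 → ℚ) → ℚ) (hφ : ∀ u, Φ u u = 2 * φ u)
    (y : ℕ → Fin 3 → ℚ)
    (hone : ∀ i, φ (y i) = 1)
    (hrec : ∀ i, y (i + 3) = Φ (y (i + 2)) (y i) • y (i + 2) - y i) :
    ∀ i, Matrix.det (Matrix.of ![y (i + 2), y (i + 1), y i])
      = (-1 : ℚ) ^ i * Matrix.det (Matrix.of ![y 2, y 1, y 0]) :=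
  recursive_sequence_det_alternates_general Φ y hrec
end

section
/- With the recursive sequence y_{i+1} = Φ(y_i,y_{i−2})·y_i − y_{i−2} where φ(y_i) = 1 for all i, setting t_i = Φ(y_{i+1}, y_i), one has t_i = Φ(y_i, y_{i−2}) for all i ≥ 1, and consequently t_{i+1} = t_i·t_{i−1} − t_{i−2} for all i ≥ 1. -/
/-! Since `Φ (y i) (y i) = 2`, the map `v ↦ Φ (y i) v • y i - v` preserves `Φ (·) (y i)`; applied to
`v = y (i - 2)` it gives `t i = Φ (y (i + 1)) (y i) = Φ (y i) (y (i - 2))`. Hence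
`t (i + 1) = Φ (y (i + 1)) (y (i - 1))`, and expanding `y (i + 1)` by the recursion yields
`t i * t (i - 1) - t (i - 2)`. -/

variable {R M : Type*} [CommRing R] [AddCommGroup M] [Module R M]

namespace LinearMap

theorem apply_smul_sub_apply_self {B : M →ₗ[R] M →ₗ[R] R} (hB : ∀ u v, B u v = B v u)
    {u : M} (hu : B u u = 2) (v : M) : B (B u v • u - v) u = B u v := by
  simp only [map_sub, map_smul, sub_apply, smul_apply, smul_eq_mul, hu, hB v u]
  ring

variable {B : M →ₗ[R] M →ₗ[R] R} {y : ℕ → M}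

theorem apply_succ_eq_apply_of_rec (hB : ∀ u v, B u v = B v u) (hy : ∀ i, B (y i) (y i) = 2)
    (hrec : ∀ i, y (i + 3) = B (y (i + 2)) (y i) • y (i + 2) - y i) (i : ℕ) :
    B (y (i + 3)) (y (i + 2)) = B (y (i + 2)) (y i) := by
  rw [hrec i]
  exact apply_smul_sub_apply_self hB (hy (i + 2)) (y i)

theorem apply_succ_eq_mul_sub_of_rec (hB : ∀ u v, B u v = B v u) (hy : ∀ i, B (y i) (y i) = 2)
    (hrec : ∀ i, y (i + 3) = B (y (i + 2)) (y i) • y (i + 2) - y i) (i : ℕ) :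
    B (y (i + 4)) (y (i + 3)) =
      B (y (i + 3)) (y (i + 2)) * B (y (i + 2)) (y (i + 1)) - B (y (i + 1)) (y i) := by
  rw [apply_succ_eq_apply_of_rec hB hy hrec (i + 1), apply_succ_eq_apply_of_rec hB hy hrec i,
    hrec i, hB (y (i + 1)) (y i)]
  simp only [map_sub, map_smul, sub_apply, smul_apply, smul_eq_mul]

end LinearMap

theorem recursive_sequence_t_recurrence
    (Φ : (Fin 3 → ℚ) →ₗ[ℚ] (Fin 3 → ℚ) →ₗ[ℚ] ℚ)
    (hsymm : ∀ u v, Φ u v = Φ v u)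
    (φ : (Fin 3 → ℚ) → ℚ) (hφ : ∀ u, Φ u u = 2 * φ u)
    (y : ℕ → Fin 3 → ℚ)
    (hone : ∀ i, φ (y i) = 1)
    (hrec : ∀ i, y (i + 3) = Φ (y (i + 2)) (y i) • y (i + 2) - y i)
    (t : ℕ → ℚ) (ht : ∀ i, t i = Φ (y (i + 1)) (y i)) :
    (∀ i, t (i + 2) = Φ (y (i + 2)) (y i)) ∧
    (∀ i, t (i + 3) = t (i + 2) * t (i + 1) - t i) := by
  have hy : ∀ i, Φ (y i) (y i) = 2 := fun i => by rw [hφ, hone, mul_one]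
  refine ⟨fun i => ?_, fun i => ?_⟩
  · rw [ht]
    exact LinearMap.apply_succ_eq_apply_of_rec hsymm hy hrec i
  · simp only [ht]
    exact LinearMap.apply_succ_eq_mul_sub_of_rec hsymm hy hrec i
end

section
/- Let (t_i)_{i ≥ −1} be a sequence of integers with 1 ≤ t₋₁ < t₀ < t₁ and satisfying the recurrence t_{i+1} = t_i·t_{i−1} − t_{i−2} for i ≥ 1. Then (t_i) is strictly increasing, and for all i ≥ 1: (t_i − 1)·t_{i−1} < t_{i+1} < t_i·t_{i−1}. -/
/-! Each step of the recurrence preserves the invariant `1 ≤ t i < t (i+1) < t (i+2)`: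
from `1 ≤ a < b < c` one gets `c < c * b - a`, because `b ≥ 2` and `c > a`. Given the
invariant, both bounds on `t (i+3) = t (i+2) * t (i+1) - t i` only say `0 < t i < t (i+1)`. -/

lemma Int.lt_mul_sub {a b c : ℤ} (ha : 1 ≤ a) (hab : a < b) (hbc : b < c) : c < c * b - a := by
  nlinarith

lemma Int.mul_sub_bounds {a b c : ℤ} (ha : 0 < a) (hab : a < b) :
    (c - 1) * b < c * b - a ∧ c * b - a < c * b :=
  ⟨by linarith, by linarith⟩

section

variable {t : ℕ → ℤ} (hrec : ∀ i, t (i + 3) = t (i + 2) * t (i + 1) - t i)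
include hrec

lemma one_le_and_lt_and_lt_of_rec (h0 : 1 ≤ t 0) (h01 : t 0 < t 1) (h12 : t 1 < t 2) (i : ℕ) :
    1 ≤ t i ∧ t i < t (i + 1) ∧ t (i + 1) < t (i + 2) := by
  induction i with
  | zero => exact ⟨h0, h01, h12⟩
  | succ n ih =>
    obtain ⟨h1, h2, h3⟩ := ih
    exact ⟨by linarith, h3, hrec n ▸ Int.lt_mul_sub h1 h2 h3⟩

end

theorem t_sequence_strict_growth
    (t : ℕ → ℤ)
    (h0 : 1 ≤ t 0) (h01 : t 0 < t 1) (h12 : t 1 < t 2)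
    (hrec : ∀ i, t (i + 3) = t (i + 2) * t (i + 1) - t i) :
    StrictMono t ∧
    ∀ i, (t (i + 2) - 1) * t (i + 1) < t (i + 3) ∧ t (i + 3) < t (i + 2) * t (i + 1) := by
  have inv := one_le_and_lt_and_lt_of_rec hrec h0 h01 h12
  refine ⟨strictMono_nat_of_lt_succ fun n => (inv n).2.1, fun i => ?_⟩
  obtain ⟨h1, h2, -⟩ := inv i
  rw [hrec i]
  exact Int.mul_sub_bounds (by omega) h2
end

section
/- Let (t_i) be an increasing sequence of integers ≥ 2 satisfying (t_i − 1)·t_{i−1} < t_{i+1} < t_i·t_{i−1} for all i ≥ 1. Then there exist constants 0 < c₁ ≤ c₂ such that c₁·t_i^γ ≤ t_{i+1} ≤ c₂·t_i^γ for all i, where γ = (1+√5)/2. -/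
/-!
With `x i = log t i`, the recurrence gives `t (i+2) t (i+1) / 2 ≤ t (i+3) ≤ t (i+2) t (i+1)`, so `x`
satisfies the Fibonacci recurrence up to an error of at most `log 2`. The deviation
`e i = x (i+1) - φ x i` then obeys `e (i+1) = ψ e i + O(1)` with `|ψ| = φ - 1 < 1`, hence stays
bounded, say by `M`, and exponentiating gives the claim with `c₁ = exp (-M)` and `c₂ = exp M`.
-/

open Real
open scoped goldenRatio

lemma le_max_div_one_sub_of_le_mul_add {a : ℕ → ℝ} {q δ : ℝ} (hq₀ : 0 ≤ q) (hq₁ : q < 1)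
    (h : ∀ n, a (n + 1) ≤ q * a n + δ) (n : ℕ) : a n ≤ max (a 0) (δ / (1 - q)) := by
  induction n with
  | zero => exact le_max_left _ _
  | succ n ih =>
    set B := max (a 0) (δ / (1 - q))
    have hδ : δ ≤ (1 - q) * B := by
      rw [← div_le_iff₀' (by linarith)]
      exact le_max_right _ _
    calc a (n + 1) ≤ q * a n + δ := h n
      _ ≤ q * B + (1 - q) * B := by gcongr
      _ = B := by ring

lemma sub_goldenRatio_mul_eq (x : ℕ → ℝ) (n : ℕ) :
    x (n + 2) - φ * x (n + 1) = ψ * (x (n + 1) - φ * x n) + (x (n + 2) - x (n + 1) - x n) := by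
  rw [← one_sub_goldenConj]
  linear_combination (-x n) * goldenRatio_sq

lemma abs_sub_goldenRatio_mul_le {x : ℕ → ℝ} {δ : ℝ}
    (hx : ∀ n, |x (n + 2) - x (n + 1) - x n| ≤ δ) (n : ℕ) :
    |x (n + 1) - φ * x n| ≤ max |x 1 - φ * x 0| (δ / (1 - |ψ|)) := by
  have habs : |ψ| < 1 := by
    rw [abs_of_neg goldenConj_neg]
    linarith [neg_one_lt_goldenConj]
  refine le_max_div_one_sub_of_le_mul_add (a := fun n => |x (n + 1) - φ * x n|)
    (abs_nonneg ψ) habs (fun n => ?_) n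
  calc |x (n + 2) - φ * x (n + 1)|
      = |ψ * (x (n + 1) - φ * x n) + (x (n + 2) - x (n + 1) - x n)| := by
        rw [sub_goldenRatio_mul_eq]
    _ ≤ |ψ| * |x (n + 1) - φ * x n| + δ := by
        grw [abs_add_le, abs_mul, hx n]

lemma abs_log_sub_log_sub_log_le_log_two {a b c : ℝ} (ha : 2 ≤ a) (hb : 0 < b)
    (hlo : (a - 1) * b ≤ c) (hhi : c ≤ a * b) : |log c - log a - log b| ≤ log 2 := by
  have ha₀ : 0 < a := by linarith
  have hab : 0 < a * b := mul_pos ha₀ hb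
  have hhalf : a * b / 2 ≤ c := by nlinarith
  have hc : 0 < c := (half_pos hab).trans_le hhalf
  have hupper : log c ≤ log a + log b := by
    rw [← log_mul ha₀.ne' hb.ne']
    exact log_le_log hc hhi
  have hlower : log a + log b - log 2 ≤ log c := by
    rw [← log_mul ha₀.ne' hb.ne', ← log_div hab.ne' two_ne_zero]
    exact log_le_log (half_pos hab) hhalf
  rw [abs_le]
  constructor <;> linarith [log_nonneg one_le_two]

lemma exp_neg_mul_rpow_le_and_le_exp_mul_rpow {a b r M : ℝ} (ha : 0 < a) (hb : 0 < b)
    (h : |log b - r * log a| ≤ M) : exp (-M) * a ^ r ≤ b ∧ b ≤ exp M * a ^ r := by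
  rw [rpow_def_of_pos ha, ← exp_add, ← exp_add, ← le_log_iff_exp_le hb, ← log_le_iff_le_exp hb]
  rw [abs_le] at h
  constructor <;> linarith

theorem t_sequence_golden_growth
    (t : ℕ → ℤ)
    (hmono : StrictMono t) (h2 : 2 ≤ t 0)
    (hrec : ∀ i, (t (i + 2) - 1) * t (i + 1) < t (i + 3) ∧ t (i + 3) < t (i + 2) * t (i + 1)) :
    ∃ c₁ c₂ : ℝ, 0 < c₁ ∧ c₁ ≤ c₂ ∧
      ∀ i, c₁ * (t i : ℝ) ^ ((1 + Real.sqrt 5) / 2) ≤ (t (i + 1) : ℝ) ∧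
        (t (i + 1) : ℝ) ≤ c₂ * (t i : ℝ) ^ ((1 + Real.sqrt 5) / 2) := by
  have ht₂ : ∀ i, (2 : ℝ) ≤ t i := fun i => by exact_mod_cast h2.trans (hmono.monotone i.zero_le)
  have htpos : ∀ i, (0 : ℝ) < t i := fun i => two_pos.trans_le (ht₂ i)
  set x : ℕ → ℝ := fun i => log (t i)
  have hfib : ∀ n, |x (n + 3) - x (n + 2) - x (n + 1)| ≤ log 2 := fun n => by
    obtain ⟨hlo, hhi⟩ := hrec n
    exact abs_log_sub_log_sub_log_le_log_two (ht₂ _) (htpos _)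
      (by exact_mod_cast hlo.le) (by exact_mod_cast hhi.le)
  set M := max |x 1 - φ * x 0| (max |x 2 - φ * x 1| (log 2 / (1 - |ψ|)))
  have hM : ∀ i, |x (i + 1) - φ * x i| ≤ M := by
    rintro (_ | i)
    · exact le_max_left _ _
    · exact (abs_sub_goldenRatio_mul_le (x := fun n => x (n + 1)) hfib i).trans (le_max_right _ _)
  have hM₀ : 0 ≤ M := (abs_nonneg _).trans (hM 0)
  refine ⟨exp (-M), exp M, exp_pos _, exp_le_exp.2 (by linarith), fun i => ?_⟩
  exact exp_neg_mul_rpow_le_and_le_exp_mul_rpow (htpos i) (htpos (i + 1)) (hM i)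
end

section
/- The projective distance dist([x],[y]) = ‖x ∧ y‖/(‖x‖·‖y‖) on ℙ²(ℝ) satisfies the quasi-triangle inequality dist([x],[z]) ≤ dist([x],[y]) + 2·dist([y],[z]) for all nonzero x, y, z ∈ ℝ³. -/
/-!
Pick a coordinate `i` with `|y i| = ‖y‖` and write `z = s • y + f` with `s = z i / y i`. Then
`|s| ≤ ‖z‖ / ‖y‖`, and `f k = (y i * z k - y k * z i) / y i` is, up to sign, a coordinate of
`y ⨯₃ z` divided by `‖y‖`, so `‖f‖ ≤ ‖y ⨯₃ z‖ / ‖y‖`. By bilinearity and `‖a ⨯₃ b‖ ≤ 2 ‖a‖ ‖b‖`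
in the sup norm, `‖x ⨯₃ z‖ ≤ |s| ‖x ⨯₃ y‖ + 2 ‖x‖ ‖f‖`; dividing by `‖x‖ ‖z‖` gives the claim.
-/

open scoped Matrix

lemma abs_mul_sub_mul_le_two_mul_norm {ι : Type*} [Fintype ι] (a b : ι → ℝ) (i j k l : ι) :
    |a i * b j - a k * b l| ≤ 2 * ‖a‖ * ‖b‖ := by
  have ha : ∀ i, |a i| ≤ ‖a‖ := fun i => by simpa using norm_le_pi_norm a i
  have hb : ∀ i, |b i| ≤ ‖b‖ := fun i => by simpa using norm_le_pi_norm b i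
  calc |a i * b j - a k * b l| ≤ |a i| * |b j| + |a k| * |b l| := by
        simpa only [abs_mul] using abs_sub (a i * b j) (a k * b l)
    _ ≤ ‖a‖ * ‖b‖ + ‖a‖ * ‖b‖ := by
        gcongr
        exacts [ha i, hb j, ha k, hb l]
    _ = 2 * ‖a‖ * ‖b‖ := by ring

lemma norm_cross_le_two_mul (a b : Fin 3 → ℝ) : ‖a ⨯₃ b‖ ≤ 2 * ‖a‖ * ‖b‖ := by
  refine (pi_norm_le_iff_of_nonneg (by positivity)).mpr fun j => ?_
  rw [Real.norm_eq_abs]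
  fin_cases j <;> exact abs_mul_sub_mul_le_two_mul_norm a b _ _ _ _

lemma abs_mul_sub_mul_le_norm_cross (a b : Fin 3 → ℝ) (i k : Fin 3) :
    |a i * b k - a k * b i| ≤ ‖a ⨯₃ b‖ := by
  have h : ∀ j, |(a ⨯₃ b) j| ≤ ‖a ⨯₃ b‖ := fun j => by simpa using norm_le_pi_norm (a ⨯₃ b) j
  have h0 := h 0
  have h1 := h 1
  have h2 := h 2
  simp only [cross_apply] at h0 h1 h2
  fin_cases i <;> fin_cases k <;> simp <;> first | assumption | (rw [abs_sub_comm]; assumption)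

lemma exists_eq_smul_add (y z : Fin 3 → ℝ) (hy : y ≠ 0) :
    ∃ (s : ℝ) (f : Fin 3 → ℝ), z = s • y + f ∧ |s| * ‖y‖ ≤ ‖z‖ ∧ ‖f‖ * ‖y‖ ≤ ‖y ⨯₃ z‖ := by
  have hy' : 0 < ‖y‖ := norm_pos_iff.mpr hy
  obtain ⟨i, hi⟩ := (IsGreatest.pi_norm y).1
  simp only [Real.norm_eq_abs] at hi
  have hyi : y i ≠ 0 := abs_pos.mp (hi ▸ hy')
  refine ⟨z i / y i, z - (z i / y i) • y, by abel, ?_, ?_⟩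
  · rw [← hi, abs_div, div_mul_cancel₀ _ (abs_ne_zero.mpr hyi)]
    simpa using norm_le_pi_norm z i
  · rw [← le_div_iff₀ hy']
    refine (pi_norm_le_iff_of_nonneg (by positivity)).mpr fun k => ?_
    rw [le_div_iff₀ hy', ← hi, Real.norm_eq_abs, ← abs_mul]
    have hfk : (z - (z i / y i) • y) k * y i = y i * z k - y k * z i := by
      simp only [Pi.sub_apply, Pi.smul_apply, smul_eq_mul]
      field_simp
    rw [hfk]
    exact abs_mul_sub_mul_le_norm_cross y z i k

lemma norm_cross_mul_norm_le (x y z : Fin 3 → ℝ) :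
    ‖x ⨯₃ z‖ * ‖y‖ ≤ ‖z‖ * ‖x ⨯₃ y‖ + 2 * ‖x‖ * ‖y ⨯₃ z‖ := by
  rcases eq_or_ne y 0 with rfl | hy
  · simp
  obtain ⟨s, f, rfl, hs, hf⟩ := exists_eq_smul_add y z hy
  calc ‖x ⨯₃ (s • y + f)‖ * ‖y‖ ≤ (|s| * ‖x ⨯₃ y‖ + 2 * ‖x‖ * ‖f‖) * ‖y‖ := by
        gcongr
        rw [map_add, map_smul, ← Real.norm_eq_abs, ← norm_smul]
        exact (norm_add_le _ _).trans (by gcongr; exact norm_cross_le_two_mul x f)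
    _ = |s| * ‖y‖ * ‖x ⨯₃ y‖ + 2 * ‖x‖ * (‖f‖ * ‖y‖) := by ring
    _ ≤ ‖s • y + f‖ * ‖x ⨯₃ y‖ + 2 * ‖x‖ * ‖y ⨯₃ (s • y + f)‖ := by gcongr

theorem projective_distance_quasi_triangle
    (x y z : Fin 3 → ℝ) (hx : x ≠ 0) (hy : y ≠ 0) (hz : z ≠ 0) :
    ‖crossProduct x z‖ / (‖x‖ * ‖z‖) ≤
      ‖crossProduct x y‖ / (‖x‖ * ‖y‖) + 2 * (‖crossProduct y z‖ / (‖y‖ * ‖z‖)) := by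
  have hx' : 0 < ‖x‖ := norm_pos_iff.mpr hx
  have hy' : 0 < ‖y‖ := norm_pos_iff.mpr hy
  have hz' : 0 < ‖z‖ := norm_pos_iff.mpr hz
  rw [div_le_iff₀ (by positivity)]
  calc ‖x ⨯₃ z‖ ≤ (‖z‖ * ‖x ⨯₃ y‖ + 2 * ‖x‖ * ‖y ⨯₃ z‖) / ‖y‖ :=
        (le_div_iff₀ hy').mpr (norm_cross_mul_norm_le x y z)
    _ = _ := by field_simp
end

section
/- Let x, y, z ∈ ℤ³ each with first coordinates bounded by X in absolute value, and suppose L(x), L(y), L(z) ≤ L where L(w) = max(|w₀ξ₁ − w₁|, |w₀ξ₂ − w₂|) for fixed reals ξ₁, ξ₂ and w = (w₀,w₁,w₂). If z's first coordinate satisfies |z₀| ≤ X and x, y have L(x) ≤ L₁, L(y) ≤ L₂, then |det(x, y, z)| ≤ 6·X·L₁·L₂. (Determinant bound of Davenport–Schmidt.) -/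
/-! Replacing the last two columns `c₁, c₂` by `ξ₁ c₀ - c₁, ξ₂ c₀ - c₂` does not change the
determinant and turns every row `w` into `(w₀, w₀ξ₁ - w₁, w₀ξ₂ - w₂)`, whose last two entries are
at most `L(w)`. Expanding along the first column, each of the three terms is a first coordinate
(at most `X`) times a `2 × 2` minor of such entries (at most `2 L₁ L₂`, as `L₂ ≤ L₁`). -/

namespace Matrix

theorem det_of_residuals (ξ₁ ξ₂ : ℝ) (A : Matrix (Fin 3) (Fin 3) ℝ) :
    (of fun i => ![A i 0, A i 0 * ξ₁ - A i 1, A i 0 * ξ₂ - A i 2]).det = A.det := by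
  simp only [det_fin_three, of_apply, Matrix.cons_val]
  ring

theorem abs_det_fin_three_le (A : Matrix (Fin 3) (Fin 3) ℝ) (X : ℝ) (l : Fin 3 → ℝ)
    (hX : ∀ i, |A i 0| ≤ X) (hl : ∀ i, max |A i 1| |A i 2| ≤ l i) :
    |A.det| ≤ 2 * X * (l 1 * l 2 + l 0 * l 2 + l 0 * l 1) := by
  have h₁ i : |A i 1| ≤ l i := (le_max_left _ _).trans (hl i)
  have h₂ i : |A i 2| ≤ l i := (le_max_right _ _).trans (hl i)
  have minor_le i j : |A i 1 * A j 2 - A i 2 * A j 1| ≤ 2 * (l i * l j) := by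
    have hi : 0 ≤ l i := (abs_nonneg _).trans (h₁ i)
    calc |A i 1 * A j 2 - A i 2 * A j 1| ≤ |A i 1| * |A j 2| + |A i 2| * |A j 1| := by
          simpa only [abs_mul] using abs_sub (A i 1 * A j 2) (A i 2 * A j 1)
      _ ≤ l i * l j + l i * l j :=
          add_le_add (mul_le_mul (h₁ i) (h₂ j) (abs_nonneg _) hi)
            (mul_le_mul (h₂ i) (h₁ j) (abs_nonneg _) hi)
      _ = 2 * (l i * l j) := by ring
  have expansion : A.det = A 0 0 * (A 1 1 * A 2 2 - A 1 2 * A 2 1)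
      - A 1 0 * (A 0 1 * A 2 2 - A 0 2 * A 2 1) + A 2 0 * (A 0 1 * A 1 2 - A 0 2 * A 1 1) := by
    rw [det_fin_three]; ring
  have term_le i j k : |A i 0 * (A j 1 * A k 2 - A j 2 * A k 1)| ≤ X * (2 * (l j * l k)) := by
    rw [abs_mul]
    exact mul_le_mul (hX i) (minor_le j k) (abs_nonneg _) ((abs_nonneg _).trans (hX i))
  rw [expansion]
  calc _ ≤ |A 0 0 * (A 1 1 * A 2 2 - A 1 2 * A 2 1)| + |A 1 0 * (A 0 1 * A 2 2 - A 0 2 * A 2 1)|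
        + |A 2 0 * (A 0 1 * A 1 2 - A 0 2 * A 1 1)| :=
        (abs_add_le _ _).trans (add_le_add_left (abs_sub _ _) _)
    _ ≤ X * (2 * (l 1 * l 2)) + X * (2 * (l 0 * l 2)) + X * (2 * (l 0 * l 1)) := by
        gcongr <;> apply term_le
    _ = _ := by ring

end Matrix

theorem davenport_schmidt_det_bound_general
    (ξ₁ ξ₂ : ℝ) (x y z : Fin 3 → ℤ) (X L₁ L₂ : ℝ)
    (hx0 : |(x 0 : ℝ)| ≤ X) (hy0 : |(y 0 : ℝ)| ≤ X) (hz0 : |(z 0 : ℝ)| ≤ X)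
    (hLx : max |(x 0 : ℝ) * ξ₁ - (x 1 : ℝ)| |(x 0 : ℝ) * ξ₂ - (x 2 : ℝ)| ≤ L₁)
    (hLy : max |(y 0 : ℝ) * ξ₁ - (y 1 : ℝ)| |(y 0 : ℝ) * ξ₂ - (y 2 : ℝ)| ≤ L₂)
    (hLz : max |(z 0 : ℝ) * ξ₁ - (z 1 : ℝ)| |(z 0 : ℝ) * ξ₂ - (z 2 : ℝ)| ≤ L₂)
    (hL21 : L₂ ≤ L₁) :
    |Matrix.det (Matrix.of
        ![(fun k => (x k : ℝ)), (fun k => (y k : ℝ)), (fun k => (z k : ℝ))])|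
      ≤ 6 * X * L₁ * L₂ := by
  rw [← Matrix.det_of_residuals ξ₁ ξ₂]
  have hX : 0 ≤ X := (abs_nonneg _).trans hx0
  have hL₂ : 0 ≤ L₂ := (abs_nonneg _).trans ((le_max_left _ _).trans hLy)
  refine (Matrix.abs_det_fin_three_le _ X ![L₁, L₂, L₂] ?_ ?_).trans ?_
  · intro i; fin_cases i
    exacts [hx0, hy0, hz0]
  · intro i; fin_cases i
    exacts [hLx, hLy, hLz]
  · simp only [Matrix.cons_val]
    nlinarith [mul_le_mul_of_nonneg_left (mul_le_mul_of_nonneg_right hL21 hL₂) hX]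

theorem davenport_schmidt_det_bound
    (ξ₁ ξ₂ : ℝ) (x y z : Fin 3 → ℤ) (X L₁ L₂ : ℝ)
    (hx0 : |(x 0 : ℝ)| ≤ X) (hy0 : |(y 0 : ℝ)| ≤ X) (hz0 : |(z 0 : ℝ)| ≤ X)
    (hLx : max |(x 0 : ℝ) * ξ₁ - (x 1 : ℝ)| |(x 0 : ℝ) * ξ₂ - (x 2 : ℝ)| ≤ L₁)
    (hL1 : L₁ ≤ 1)
    (hLy : max |(y 0 : ℝ) * ξ₁ - (y 1 : ℝ)| |(y 0 : ℝ) * ξ₂ - (y 2 : ℝ)| ≤ L₂)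
    (hL2 : L₂ ≤ 1)
    (hLz : max |(z 0 : ℝ) * ξ₁ - (z 1 : ℝ)| |(z 0 : ℝ) * ξ₂ - (z 2 : ℝ)| ≤ L₂)
    (hL21 : L₂ ≤ L₁) :
    |Matrix.det (Matrix.of
        ![(fun k => (x k : ℝ)), (fun k => (y k : ℝ)), (fun k => (z k : ℝ))])|
      ≤ 6 * X * L₁ * L₂ :=
  davenport_schmidt_det_bound_general ξ₁ ξ₂ x y z X L₁ L₂ hx0 hy0 hz0 hLx hLy hLz hL21
end
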